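/- arXiv:1907.01594 — 7 statements merged into one kernel-verified Lean document; each statement's English description precedes it below -/
import Mathlib

section
/- For a fixed complex 2×2 matrix W, the function Z ↦ 1/det(Z−W), defined on the open set of complex 2×2 matrices Z with det(Z−W) ≠ 0, is annihilated by the second-order differential operator □ = ∂²/∂z₁₁∂z₂₂ − ∂²/∂z₁₂∂z₂₁, where z₁₁, z₁₂, z₂₁, z₂₂ are the entries of Z. -/
noncomputable section

/-- The space of 2×2 complex matrices, as functions of indices. -/
abbrev M2 : Type := Fin 2 → Fin 2 → ℂ

/-- The elementary matrix with a 1 in position (i,j). -/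
def eM (i j : Fin 2) : M2 := fun a b => if a = i ∧ b = j then (1 : ℂ) else 0

/-- The partial derivative ∂/∂z_{ij}. -/
noncomputable def pd (i j : Fin 2) (f : M2 → ℂ) : M2 → ℂ :=
  fun Z => fderiv ℂ f Z (eM i j)

/-- The determinant N(Z) = z₁₁z₂₂ − z₁₂z₂₁. -/
def detM (Z : M2) : ℂ := Z 0 0 * Z 1 1 - Z 0 1 * Z 1 0

namespace Stmt0Aux

def ev (a b : Fin 2) : M2 →L[ℂ] ℂ :=
  (ContinuousLinearMap.proj (R := ℂ) (φ := fun _ : Fin 2 => ℂ) b).comp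
    (ContinuousLinearMap.proj (R := ℂ) (φ := fun _ : Fin 2 => Fin 2 → ℂ) a)

@[simp] lemma ev_eM (a b i j : Fin 2) :
    ev a b (eM i j) = if a = i ∧ b = j then (1 : ℂ) else 0 := rfl

variable (W : M2)

def dW : M2 → ℂ := fun Y => detM (fun a b => Y a b - W a b)

lemma dW_eq (Y : M2) :
    dW W Y = (Y 0 0 - W 0 0) * (Y 1 1 - W 1 1) - (Y 0 1 - W 0 1) * (Y 1 0 - W 1 0) := rfl

def L (Y : M2) : M2 →L[ℂ] ℂ :=
  ((Y 0 0 - W 0 0) • ev 1 1 + (Y 1 1 - W 1 1) • ev 0 0) -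
    ((Y 0 1 - W 0 1) • ev 1 0 + (Y 1 0 - W 1 0) • ev 0 1)

@[simp] lemma L_e00 (Y : M2) : L W Y (eM 0 0) = Y 1 1 - W 1 1 := by
  simp [L]
@[simp] lemma L_e11 (Y : M2) : L W Y (eM 1 1) = Y 0 0 - W 0 0 := by
  simp [L]
@[simp] lemma L_e01 (Y : M2) : L W Y (eM 0 1) = -(Y 1 0 - W 1 0) := by
  simp [L]
@[simp] lemma L_e10 (Y : M2) : L W Y (eM 1 0) = -(Y 0 1 - W 0 1) := by
  simp [L]

lemma hasFDeriv_entry (a b : Fin 2) (Y : M2) :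
    HasFDerivAt (fun Y : M2 => Y a b - W a b) (ev a b) Y := by
  exact ((ev a b).hasFDerivAt (x := Y)).sub_const (W a b)

lemma hasFDeriv_dW (Y : M2) : HasFDerivAt (dW W) (L W Y) Y :=
  ((hasFDeriv_entry W 0 0 Y).mul (hasFDeriv_entry W 1 1 Y)).sub
    ((hasFDeriv_entry W 0 1 Y).mul (hasFDeriv_entry W 1 0 Y))

lemma hasFDeriv_inv_dW {Y : M2} (hY : dW W Y ≠ 0) :
    HasFDerivAt (fun Y => (dW W Y)⁻¹) ((-(dW W Y ^ 2)⁻¹) • L W Y) Y :=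
  (hasDerivAt_inv hY).comp_hasFDerivAt Y (hasFDeriv_dW W Y)

lemma hasFDeriv_sq (Y : M2) :
    HasFDerivAt (fun Y => dW W Y ^ 2) (dW W Y • L W Y + dW W Y • L W Y) Y := by
  have := (hasFDeriv_dW W Y).mul (hasFDeriv_dW W Y)
  simp only [sq]
  exact this

lemma hasFDeriv_inv_sq {Y : M2} (hY : dW W Y ≠ 0) :
    HasFDerivAt (fun Y => (dW W Y ^ 2)⁻¹)
      ((-((dW W Y ^ 2) ^ 2)⁻¹) • (dW W Y • L W Y + dW W Y • L W Y)) Y :=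
  (hasDerivAt_inv (pow_ne_zero 2 hY)).comp_hasFDerivAt Y (hasFDeriv_sq W Y)

lemma eventually_ne {Z : M2} (hZ : dW W Z ≠ 0) : ∀ᶠ Y in nhds Z, dW W Y ≠ 0 :=
  ((hasFDeriv_dW W Z).continuousAt.eventually_ne hZ)

-- closed forms for first partials on the set where dW ≠ 0
lemma pd11_eq {Y : M2} (hY : dW W Y ≠ 0) :
    pd 1 1 (fun Y => (dW W Y)⁻¹) Y = -(dW W Y ^ 2)⁻¹ * (Y 0 0 - W 0 0) := by
  simp only [pd, (hasFDeriv_inv_dW W hY).fderiv, ContinuousLinearMap.smul_apply, L_e11,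
    smul_eq_mul]

lemma pd10_eq {Y : M2} (hY : dW W Y ≠ 0) :
    pd 1 0 (fun Y => (dW W Y)⁻¹) Y = (dW W Y ^ 2)⁻¹ * (Y 0 1 - W 0 1) := by
  simp only [pd, (hasFDeriv_inv_dW W hY).fderiv, ContinuousLinearMap.smul_apply, L_e10,
    smul_eq_mul]
  ring

end Stmt0Aux

open Stmt0Aux in
/-- For fixed W, the function Z ↦ 1/det(Z−W) is annihilated by
□ = ∂²/∂z₁₁∂z₂₂ − ∂²/∂z₁₂∂z₂₁ wherever det(Z−W) ≠ 0. -/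
theorem stmt0 (W Z : M2) (h : detM (fun a b => Z a b - W a b) ≠ 0) :
    pd 0 0 (pd 1 1 (fun Y => (detM (fun a b => Y a b - W a b))⁻¹)) Z -
      pd 0 1 (pd 1 0 (fun Y => (detM (fun a b => Y a b - W a b))⁻¹)) Z = 0 := by
  have hZ : dW W Z ≠ 0 := h
  -- the statement's function is dW⁻¹
  have hfun : (fun Y => (detM (fun a b => Y a b - W a b))⁻¹) = fun Y => (dW W Y)⁻¹ := rfl
  rw [hfun]
  -- eventual equalities
  have h11 : pd 1 1 (fun Y => (dW W Y)⁻¹) =ᶠ[nhds Z]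
      fun Y => -(dW W Y ^ 2)⁻¹ * (Y 0 0 - W 0 0) := by
    filter_upwards [eventually_ne W hZ] with Y hY using pd11_eq W hY
  have h10 : pd 1 0 (fun Y => (dW W Y)⁻¹) =ᶠ[nhds Z]
      fun Y => (dW W Y ^ 2)⁻¹ * (Y 0 1 - W 0 1) := by
    filter_upwards [eventually_ne W hZ] with Y hY using pd10_eq W hY
  -- derivatives of the closed forms
  have hg11 : HasFDerivAt (fun Y => -(dW W Y ^ 2)⁻¹ * (Y 0 0 - W 0 0))
      ((-(dW W Z ^ 2)⁻¹) • ev 0 0 + (Z 0 0 - W 0 0) •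
        (-((-((dW W Z ^ 2) ^ 2)⁻¹) • (dW W Z • L W Z + dW W Z • L W Z)))) Z :=
    ((hasFDeriv_inv_sq W hZ).neg).mul (hasFDeriv_entry W 0 0 Z)
  have hg10 : HasFDerivAt (fun Y => (dW W Y ^ 2)⁻¹ * (Y 0 1 - W 0 1))
      (((dW W Z ^ 2)⁻¹) • ev 0 1 + (Z 0 1 - W 0 1) •
        ((-((dW W Z ^ 2) ^ 2)⁻¹) • (dW W Z • L W Z + dW W Z • L W Z))) Z :=
    (hasFDeriv_inv_sq W hZ).mul (hasFDeriv_entry W 0 1 Z)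
  have e1 : pd 0 0 (pd 1 1 (fun Y => (dW W Y)⁻¹)) Z =
      ((-(dW W Z ^ 2)⁻¹) • ev 0 0 + (Z 0 0 - W 0 0) •
        (-((-((dW W Z ^ 2) ^ 2)⁻¹) • (dW W Z • L W Z + dW W Z • L W Z)))) (eM 0 0) := by
    simp only [pd, h11.fderiv_eq, hg11.fderiv]
  have e2 : pd 0 1 (pd 1 0 (fun Y => (dW W Y)⁻¹)) Z =
      (((dW W Z ^ 2)⁻¹) • ev 0 1 + (Z 0 1 - W 0 1) •
        ((-((dW W Z ^ 2) ^ 2)⁻¹) • (dW W Z • L W Z + dW W Z • L W Z))) (eM 0 1) := by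
    simp only [pd, h10.fderiv_eq, hg10.fderiv]
  rw [e1, e2]
  simp only [ContinuousLinearMap.add_apply, ContinuousLinearMap.smul_apply,
    ContinuousLinearMap.neg_apply, L_e00, L_e01, ev_eM, smul_eq_mul]
  norm_num
  rw [dW_eq] at hZ ⊢
  field_simp
  ring
end
end

section
/- Let F be a C¹ function on an open subset of the space of 2×2 complex matrices with values in 2×2 complex matrices. With ∇ = 2∂ = [[2∂₁₁, 2∂₂₁],[2∂₁₂, 2∂₂₂]], ∇⁺ = 2∂⁺ = [[2∂₂₂, −2∂₂₁],[−2∂₁₂, 2∂₁₁]], Z⁺ = [[z₂₂, −z₂₁],[−z₁₂, z₁₁]] the adjugate of Z, and E = Σᵢⱼ zᵢⱼ∂ᵢⱼ the Euler (degree) operator, one has the operator identity ∇⁺(Z⁺F) + Z(∇F) = 2(E + 2)F, where the matrix products are products of 2×2 matrices (of operators/variables) applied to the matrix-valued function F. -/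
noncomputable section

/-- Matrix-valued functions, given by their entry functions. -/
abbrev MF : Type := Fin 2 → Fin 2 → M2 → ℂ

/-- Entry (i,j) of the operator matrix ∂ = [[∂₁₁, ∂₂₁],[∂₁₂, ∂₂₂]]. -/
noncomputable def delE (i j : Fin 2) (f : M2 → ℂ) : M2 → ℂ := pd j i f

/-- Entry (i,j) of the operator matrix ∂⁺ = [[∂₂₂, −∂₂₁],[−∂₁₂, ∂₁₁]]. -/
noncomputable def delPE (i j : Fin 2) (f : M2 → ℂ) : M2 → ℂ :=
  fun Z => (-1 : ℂ) ^ ((i : ℕ) + (j : ℕ)) * pd (1 - i) (1 - j) f Z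

/-- Apply an operator matrix on the left of a matrix of functions (formal matrix product). -/
noncomputable def opL (D : Fin 2 → Fin 2 → (M2 → ℂ) → M2 → ℂ) (F : MF) : MF :=
  fun i j Z => ∑ k, D i k (F k j) Z

/-- Apply an operator matrix on the right of a matrix of functions (formal matrix product). -/
noncomputable def opR (F : MF) (D : Fin 2 → Fin 2 → (M2 → ℂ) → M2 → ℂ) : MF :=
  fun i j Z => ∑ k, D k j (F i k) Z

/-- The adjugate F⁺ = [[F₂₂, −F₁₂],[−F₂₁, F₁₁]] of a matrix of functions. -/
def adjF (F : MF) : MF :=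
  fun i j Z => (-1 : ℂ) ^ ((i : ℕ) + (j : ℕ)) * F (1 - j) (1 - i) Z

/-- The Maxwell operator Mx F = 4(∂F∂ − ∂∂⁺F⁺). -/
noncomputable def Mx (F : MF) : MF :=
  fun i j Z => 4 * (opR (opL delE F) delE i j Z - opL delE (opL delPE (adjF F)) i j Z)

noncomputable def evCLM (a b : Fin 2) : M2 →L[ℂ] ℂ :=
  (ContinuousLinearMap.proj b : (Fin 2 → ℂ) →L[ℂ] ℂ).comp
    (ContinuousLinearMap.proj a : M2 →L[ℂ] (Fin 2 → ℂ))

lemma evCLM_apply (a b : Fin 2) (Y : M2) : evCLM a b Y = Y a b := rfl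

lemma evCLM_diff (a b : Fin 2) (Z : M2) :
    DifferentiableAt ℂ (fun Y : M2 => Y a b) Z := (evCLM a b).differentiableAt

lemma pd_mul (c : ℂ) (a b p q : Fin 2) (f : M2 → ℂ) (Z : M2)
    (hf : DifferentiableAt ℂ f Z) :
    pd p q (fun Y => (c * Y a b) * f Y) Z =
      (c * (if a = p ∧ b = q then (1:ℂ) else 0)) * f Z + (c * Z a b) * pd p q f Z := by
  have hL : DifferentiableAt ℂ (fun Y : M2 => c * Y a b) Z := (evCLM_diff a b Z).const_mul c
  unfold pd
  rw [fderiv_fun_mul hL hf]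
  have h1 : fderiv ℂ (fun Y : M2 => c * Y a b) Z = c • (evCLM a b : M2 →L[ℂ] ℂ) := by
    rw [fderiv_const_mul (evCLM_diff a b Z) c]
    congr 1
    exact ((evCLM a b).fderiv : _)
  rw [h1]
  simp only [ContinuousLinearMap.add_apply, ContinuousLinearMap.smul_apply, evCLM_apply,
    smul_eq_mul]
  have h2 : eM p q a b = (if a = p ∧ b = q then (1:ℂ) else 0) := rfl
  rw [h2]
  ring

lemma pd_inner (k j p q : Fin 2) (F : MF) (Z : M2)
    (hd : ∀ m, DifferentiableAt ℂ (F m j) Z) :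
    pd p q (fun Y => ∑ m : Fin 2, ((-1 : ℂ) ^ ((k : ℕ) + (m : ℕ)) * Y (1 - m) (1 - k)) * F m j Y) Z
      = ∑ m : Fin 2,
        (((-1 : ℂ) ^ ((k : ℕ) + (m : ℕ)) *
            (if (1 - m) = p ∧ (1 - k) = q then (1:ℂ) else 0)) * F m j Z +
          ((-1 : ℂ) ^ ((k : ℕ) + (m : ℕ)) * Z (1 - m) (1 - k)) * pd p q (F m j) Z) := by
  have hterm : ∀ m : Fin 2, DifferentiableAt ℂ
      (fun Y : M2 => ((-1 : ℂ) ^ ((k : ℕ) + (m : ℕ)) * Y (1 - m) (1 - k)) * F m j Y) Z :=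
    fun m => (((evCLM_diff (1-m) (1-k) Z)).const_mul _).mul (hd m)
  unfold pd
  rw [fderiv_fun_sum (u := (Finset.univ : Finset (Fin 2))) (fun m _ => hterm m),
    ContinuousLinearMap.sum_apply]
  exact Finset.sum_congr rfl fun m _ => pd_mul _ _ _ _ _ _ _ (hd m)

/-- ∇⁺(Z⁺F) + Z(∇F) = 2(E + 2)F for every C¹ matrix-valued F on an open set U,
where Z⁺ is the adjugate of the coordinate matrix, ∇ = 2∂, ∇⁺ = 2∂⁺ and E is the Euler operator.
The inner function `fun Y => ∑ m, ((-1)^(k+m) * Y (1-m) (1-k)) * F m j Y` is the (k,j) entry of Z⁺F. -/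
theorem stmt3 (U : Set M2) (hU : IsOpen U) (F : MF)
    (hF : ∀ a b : Fin 2, ContDiffOn ℂ 1 (F a b) U) (i j : Fin 2) (Z : M2) (hZ : Z ∈ U) :
    (∑ k : Fin 2, 2 * delPE i k
        (fun Y => ∑ m : Fin 2, ((-1 : ℂ) ^ ((k : ℕ) + (m : ℕ)) * Y (1 - m) (1 - k)) * F m j Y) Z) +
      (∑ k : Fin 2, Z i k * ∑ m : Fin 2, 2 * delE k m (F m j) Z) =
    2 * ((∑ p : Fin 2, ∑ q : Fin 2, Z p q * pd p q (F i j) Z) + 2 * F i j Z) := by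
  have hd : ∀ m : Fin 2, DifferentiableAt ℂ (F m j) Z := fun m =>
    (((hF m j).differentiableOn one_ne_zero).differentiableAt (hU.mem_nhds hZ))
  simp only [delPE, delE]
  rw [Fin.sum_univ_two, Fin.sum_univ_two,
    pd_inner 0 j (1-i) (1-(0:Fin 2)) F Z hd, pd_inner 1 j (1-i) (1-(1:Fin 2)) F Z hd]
  fin_cases i <;>
    simp [Fin.sum_univ_two] <;> ring
end
end

section
/- With the Maxwell operator Mx F = 4(∂F∂ − ∂∂⁺F⁺) as above, for every C³ function F on an open subset of ℂ⁴ (coordinates z₁₁,z₁₂,z₂₁,z₂₂) with values in 2×2 complex matrices, one has Tr(∂⁺(Mx F)) = 0, where ∂⁺(Mx F) is the matrix product of the operator matrix ∂⁺ = [[∂₂₂,−∂₂₁],[−∂₁₂,∂₁₁]] with the matrix-valued function Mx F. -/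
noncomputable section

open scoped Topology

lemma pd_congr_nhds {f g : M2 → ℂ} {Z : M2} (h : f =ᶠ[𝓝 Z] g) (i j : Fin 2) :
    pd i j f Z = pd i j g Z := by
  simp only [pd, h.fderiv_eq]

lemma pd_add {f g : M2 → ℂ} {x : M2} (hf : DifferentiableAt ℂ f x)
    (hg : DifferentiableAt ℂ g x) (i j : Fin 2) :
    pd i j (fun z => f z + g z) x = pd i j f x + pd i j g x := by
  simp [pd, fderiv_fun_add hf hg]

lemma pd_sub {f g : M2 → ℂ} {x : M2} (hf : DifferentiableAt ℂ f x)
    (hg : DifferentiableAt ℂ g x) (i j : Fin 2) :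
    pd i j (fun z => f z - g z) x = pd i j f x - pd i j g x := by
  simp [pd, fderiv_fun_sub hf hg]

lemma pd_const_mul {f : M2 → ℂ} {x : M2} (hf : DifferentiableAt ℂ f x) (c : ℂ) (i j : Fin 2) :
    pd i j (fun z => c * f z) x = c * pd i j f x := by
  simp [pd, fderiv_const_mul hf c]

lemma pd_sum {ι : Type*} {s : Finset ι} {f : ι → M2 → ℂ} {x : M2}
    (h : ∀ i ∈ s, DifferentiableAt ℂ (f i) x) (a b : Fin 2) :
    pd a b (fun z => ∑ i ∈ s, f i z) x = ∑ i ∈ s, pd a b (f i) x := by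
  simp [pd, fderiv_fun_sum h]

lemma pd_contDiffOn {f : M2 → ℂ} {U : Set M2} (hU : IsOpen U) {n m : WithTop ℕ∞}
    (hf : ContDiffOn ℂ n f U) (h : m + 1 ≤ n) (i j : Fin 2) :
    ContDiffOn ℂ m (pd i j f) U := by
  have h1 : ContDiffOn ℂ m (fun x => fderiv ℂ f x) U := hf.fderiv_of_isOpen hU h
  exact h1.clm_apply contDiffOn_const

lemma pd_diffAt {f : M2 → ℂ} {U : Set M2} (hU : IsOpen U)
    (hf : ContDiffOn ℂ 1 f U) {x : M2} (hx : x ∈ U) :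
    DifferentiableAt ℂ f x :=
  (hf.contDiffAt (hU.mem_nhds hx)).differentiableAt one_ne_zero

lemma pd_comm {f : M2 → ℂ} {U : Set M2} (hU : IsOpen U)
    (hf : ContDiffOn ℂ 2 f U) {x : M2} (hx : x ∈ U) (a b c d : Fin 2) :
    pd a b (pd c d f) x = pd c d (pd a b f) x := by
  have hfa : ContDiffAt ℂ 2 f x := hf.contDiffAt (hU.mem_nhds hx)
  have hdf : DifferentiableAt ℂ (fderiv ℂ f) x :=
    (hfa.fderiv_right (m := 1) (by norm_num)).differentiableAt one_ne_zero
  have hsymm := hfa.isSymmSndFDerivAt (by simp)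
  have h1 : ∀ v w : M2, fderiv ℂ (fun z => fderiv ℂ f z v) x w
      = fderiv ℂ (fderiv ℂ f) x w v := by
    intro v w
    rw [fderiv_clm_apply hdf (differentiableAt_const v)]
    simp
  have e1 : pd c d f = fun z => fderiv ℂ f z (eM c d) := rfl
  have e2 : pd a b f = fun z => fderiv ℂ f z (eM a b) := rfl
  simp only [pd, e1, e2]
  rw [h1, h1, hsymm.eq]

section Main

variable {U : Set M2} {F : MF} {Z : M2}

lemma hC2 (hU : IsOpen U) (hF : ∀ a b : Fin 2, ContDiffOn ℂ 3 (F a b) U)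
    (e f p q : Fin 2) : ContDiffOn ℂ 2 (pd e f (F p q)) U :=
  pd_contDiffOn hU (hF p q) (by norm_num) e f

lemma hC1 (hU : IsOpen U) (hF : ∀ a b : Fin 2, ContDiffOn ℂ 3 (F a b) U)
    (c d e f p q : Fin 2) : ContDiffOn ℂ 1 (pd c d (pd e f (F p q))) U :=
  pd_contDiffOn hU (hC2 hU hF e f p q) (by norm_num) c d

lemma hd0 (hU : IsOpen U) (hF : ∀ a b : Fin 2, ContDiffOn ℂ 3 (F a b) U)
    (p q : Fin 2) {z : M2} (hz : z ∈ U) : DifferentiableAt ℂ (F p q) z :=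
  pd_diffAt hU ((hF p q).of_le (by norm_num)) hz

lemma hd1 (hU : IsOpen U) (hF : ∀ a b : Fin 2, ContDiffOn ℂ 3 (F a b) U)
    (e f p q : Fin 2) {z : M2} (hz : z ∈ U) : DifferentiableAt ℂ (pd e f (F p q)) z :=
  pd_diffAt hU ((hC2 hU hF e f p q).of_le (by norm_num)) hz

lemma hd2 (hU : IsOpen U) (hF : ∀ a b : Fin 2, ContDiffOn ℂ 3 (F a b) U)
    (c d e f p q : Fin 2) {z : M2} (hz : z ∈ U) :
    DifferentiableAt ℂ (pd c d (pd e f (F p q))) z :=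
  pd_diffAt hU (hC1 hU hF c d e f p q) hz

lemma Tswap12 (hU : IsOpen U) (hF : ∀ a b : Fin 2, ContDiffOn ℂ 3 (F a b) U) (hZ : Z ∈ U)
    (a b c d e f p q : Fin 2) :
    pd a b (pd c d (pd e f (F p q))) Z = pd c d (pd a b (pd e f (F p q))) Z :=
  pd_comm hU (hC2 hU hF e f p q) hZ a b c d

lemma Tswap23 (hU : IsOpen U) (hF : ∀ a b : Fin 2, ContDiffOn ℂ 3 (F a b) U) (hZ : Z ∈ U)
    (a b c d e f p q : Fin 2) :
    pd a b (pd c d (pd e f (F p q))) Z = pd a b (pd e f (pd c d (F p q))) Z := by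
  apply pd_congr_nhds
  filter_upwards [hU.mem_nhds hZ] with z hz
  exact pd_comm hU ((hF p q).of_le (by norm_num)) hz c d e f

lemma opLdelE_eq (F : MF) (k l : Fin 2) :
    opL delE F k l = fun z => (pd 0 k (F 0 l) z + pd 1 k (F 1 l) z) := by
  funext z
  show ∑ m, delE k m (F m l) z = _
  simp [delE, Fin.sum_univ_two]

lemma opLdelPE_eqOn (hU : IsOpen U) (hF : ∀ a b : Fin 2, ContDiffOn ℂ 3 (F a b) U)
    (m i : Fin 2) {z : M2} (hz : z ∈ U) :
    opL delPE (adjF F) m i z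
      = ∑ l : Fin 2, (-1:ℂ)^((m:ℕ)+(l:ℕ)) *
          ((-1:ℂ)^((l:ℕ)+(i:ℕ)) * pd (1-m) (1-l) (F (1-i) (1-l)) z) := by
  show ∑ l, delPE m l (adjF F l i) z = _
  refine Finset.sum_congr rfl fun (l : Fin 2) _ => ?_
  show (-1:ℂ)^((m:ℕ)+(l:ℕ)) * pd (1-m) (1-l) (adjF F l i) z = _
  congr 1
  have hadj : adjF F l i = fun w => (-1:ℂ)^((l:ℕ)+(i:ℕ)) * F (1-i) (1-l) w := rfl
  rw [hadj, pd_const_mul (hd0 hU hF _ _ hz)]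

set_option maxHeartbeats 1000000 in
lemma Mx_pd (hU : IsOpen U) (hF : ∀ a b : Fin 2, ContDiffOn ℂ 3 (F a b) U) (hZ : Z ∈ U)
    (a b k i : Fin 2) :
    pd a b (Mx F k i) Z
      = 4 * ((∑ l : Fin 2, ∑ m : Fin 2, pd a b (pd i l (pd m k (F m l))) Z)
          - (∑ m : Fin 2, ∑ l : Fin 2, (-1:ℂ)^((m:ℕ)+(l:ℕ)) * ((-1:ℂ)^((l:ℕ)+(i:ℕ))
              * pd a b (pd m k (pd (1-m) (1-l) (F (1-i) (1-l)))) Z))) := by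
  have hev : Mx F k i =ᶠ[𝓝 Z] fun z =>
      4 * ((∑ l : Fin 2, ∑ m : Fin 2, pd i l (pd m k (F m l)) z)
        - (∑ m : Fin 2, ∑ l : Fin 2, (-1:ℂ)^((m:ℕ)+(l:ℕ)) * ((-1:ℂ)^((l:ℕ)+(i:ℕ))
            * pd m k (pd (1-m) (1-l) (F (1-i) (1-l))) z))) := by
    filter_upwards [hU.mem_nhds hZ] with z hz
    have hA : opR (opL delE F) delE k i z = ∑ l : Fin 2, ∑ m : Fin 2, pd i l (pd m k (F m l)) z := by
      show ∑ l, delE l i (opL delE F k l) z = _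
      refine Finset.sum_congr rfl fun (l : Fin 2) _ => ?_
      show pd i l (opL delE F k l) z = _
      rw [opLdelE_eq F k l,
        pd_add (hd1 hU hF 0 k 0 l hz) (hd1 hU hF 1 k 1 l hz), Fin.sum_univ_two]
    have hB : opL delE (opL delPE (adjF F)) k i z
        = ∑ m : Fin 2, ∑ l : Fin 2, (-1:ℂ)^((m:ℕ)+(l:ℕ)) * ((-1:ℂ)^((l:ℕ)+(i:ℕ))
            * pd m k (pd (1-m) (1-l) (F (1-i) (1-l))) z) := by
      show ∑ m, delE k m (opL delPE (adjF F) m i) z = _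
      refine Finset.sum_congr rfl fun (m : Fin 2) _ => ?_
      show pd m k (opL delPE (adjF F) m i) z = _
      have hcg : pd m k (opL delPE (adjF F) m i) z
          = pd m k (fun w => ∑ l : Fin 2, (-1:ℂ)^((m:ℕ)+(l:ℕ)) *
              ((-1:ℂ)^((l:ℕ)+(i:ℕ)) * pd (1-m) (1-l) (F (1-i) (1-l)) w)) z := by
        apply pd_congr_nhds
        filter_upwards [hU.mem_nhds hz] with w hw
        exact opLdelPE_eqOn hU hF m i hw
      rw [hcg, pd_sum (fun (l : Fin 2) _ =>
        (((hd1 hU hF (1-m) (1-l) (1-i) (1-l) hz).const_mul _).const_mul _))]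
      refine Finset.sum_congr rfl fun (l : Fin 2) _ => ?_
      rw [pd_const_mul ((hd1 hU hF (1-m) (1-l) (1-i) (1-l) hz).const_mul _),
        pd_const_mul (hd1 hU hF (1-m) (1-l) (1-i) (1-l) hz)]
    show 4 * (opR (opL delE F) delE k i z - opL delE (opL delPE (adjF F)) k i z) = _
    rw [hA, hB]
  rw [pd_congr_nhds hev]
  have hXA : DifferentiableAt ℂ (fun z => ∑ l : Fin 2, ∑ m : Fin 2, pd i l (pd m k (F m l)) z) Z :=
    DifferentiableAt.fun_sum fun (l : Fin 2) _ => DifferentiableAt.fun_sum fun (m : Fin 2) _ => hd2 hU hF i l m k m l hZ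
  have hXB : DifferentiableAt ℂ (fun z => ∑ m : Fin 2, ∑ l : Fin 2,
      (-1:ℂ)^((m:ℕ)+(l:ℕ)) * ((-1:ℂ)^((l:ℕ)+(i:ℕ))
        * pd m k (pd (1-m) (1-l) (F (1-i) (1-l))) z)) Z :=
    DifferentiableAt.fun_sum fun (m : Fin 2) _ => DifferentiableAt.fun_sum fun (l : Fin 2) _ =>
      ((hd2 hU hF m k (1-m) (1-l) (1-i) (1-l) hZ).const_mul _).const_mul _
  rw [pd_const_mul (hXA.fun_sub hXB), pd_sub hXA hXB,
    pd_sum (fun (l : Fin 2) _ => DifferentiableAt.fun_sum fun (m : Fin 2) _ => hd2 hU hF i l m k m l hZ),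
    pd_sum (fun (m : Fin 2) _ => DifferentiableAt.fun_sum fun (l : Fin 2) _ =>
      ((hd2 hU hF m k (1-m) (1-l) (1-i) (1-l) hZ).const_mul _).const_mul _)]
  congr 1
  congr 1
  · exact Finset.sum_congr rfl fun (l : Fin 2) _ =>
      pd_sum (fun (m : Fin 2) _ => hd2 hU hF i l m k m l hZ) a b
  · refine Finset.sum_congr rfl fun (m : Fin 2) _ => ?_
    rw [pd_sum (fun (l : Fin 2) _ =>
      ((hd2 hU hF m k (1-m) (1-l) (1-i) (1-l) hZ).const_mul _).const_mul _)]
    refine Finset.sum_congr rfl fun (l : Fin 2) _ => ?_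
    rw [pd_const_mul ((hd2 hU hF m k (1-m) (1-l) (1-i) (1-l) hZ).const_mul _),
      pd_const_mul (hd2 hU hF m k (1-m) (1-l) (1-i) (1-l) hZ)]

end Main

/-- Tr(∂⁺(Mx F)) = 0 for every C³ matrix-valued function F on an open set U. -/
theorem stmt5 (U : Set M2) (hU : IsOpen U) (F : MF)
    (hF : ∀ a b : Fin 2, ContDiffOn ℂ 3 (F a b) U) (Z : M2) (hZ : Z ∈ U) :
    ∑ i : Fin 2, opL delPE (Mx F) i i Z = 0 := by
  have hstart : ∑ i : Fin 2, opL delPE (Mx F) i i Z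
      = ∑ i : Fin 2, ∑ k : Fin 2,
          (-1:ℂ)^((i:ℕ)+(k:ℕ)) * pd (1-i) (1-k) (Mx F k i) Z := rfl
  rw [hstart]
  simp only [Mx_pd hU hF hZ]
  simp only [Fin.sum_univ_two]
  norm_num
  have h0 : pd 0 0 (pd 1 0 (pd 0 1 (F 0 0))) Z = pd 0 0 (pd 0 1 (pd 1 0 (F 0 0))) Z := (Tswap23 hU hF hZ 0 0 1 0 0 1 0 0)
  rw [h0]
  have h1 : pd 0 0 (pd 1 1 (pd 0 0 (F 0 0))) Z = pd 0 0 (pd 0 0 (pd 1 1 (F 0 0))) Z := (Tswap23 hU hF hZ 0 0 1 1 0 0 0 0)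
  rw [h1]
  have h2 : pd 0 0 (pd 1 1 (pd 0 1 (F 0 1))) Z = pd 0 0 (pd 0 1 (pd 1 1 (F 0 1))) Z := (Tswap23 hU hF hZ 0 0 1 1 0 1 0 1)
  rw [h2]
  have h3 : pd 0 1 (pd 0 0 (pd 1 0 (F 0 0))) Z = pd 0 0 (pd 0 1 (pd 1 0 (F 0 0))) Z := (Tswap12 hU hF hZ 0 1 0 0 1 0 0 0)
  rw [h3]
  have h4 : pd 0 1 (pd 0 0 (pd 1 1 (F 0 1))) Z = pd 0 0 (pd 0 1 (pd 1 1 (F 0 1))) Z := (Tswap12 hU hF hZ 0 1 0 0 1 1 0 1)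
  rw [h4]
  have h5 : pd 0 1 (pd 1 0 (pd 0 0 (F 0 0))) Z = pd 0 0 (pd 0 1 (pd 1 0 (F 0 0))) Z := ((Tswap23 hU hF hZ 0 1 1 0 0 0 0 0).trans (Tswap12 hU hF hZ 0 1 0 0 1 0 0 0))
  rw [h5]
  have h6 : pd 0 1 (pd 1 0 (pd 0 1 (F 0 1))) Z = pd 0 1 (pd 0 1 (pd 1 0 (F 0 1))) Z := (Tswap23 hU hF hZ 0 1 1 0 0 1 0 1)
  rw [h6]
  have h7 : pd 0 1 (pd 1 1 (pd 0 0 (F 0 1))) Z = pd 0 0 (pd 0 1 (pd 1 1 (F 0 1))) Z := ((Tswap23 hU hF hZ 0 1 1 1 0 0 0 1).trans (Tswap12 hU hF hZ 0 1 0 0 1 1 0 1))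
  rw [h7]
  have h8 : pd 0 1 (pd 1 1 (pd 1 0 (F 1 1))) Z = pd 0 1 (pd 1 0 (pd 1 1 (F 1 1))) Z := (Tswap23 hU hF hZ 0 1 1 1 1 0 1 1)
  rw [h8]
  have h9 : pd 1 0 (pd 0 0 (pd 0 1 (F 0 0))) Z = pd 0 0 (pd 0 1 (pd 1 0 (F 0 0))) Z := ((Tswap12 hU hF hZ 1 0 0 0 0 1 0 0).trans (Tswap23 hU hF hZ 0 0 1 0 0 1 0 0))
  rw [h9]
  have h10 : pd 1 0 (pd 0 0 (pd 1 1 (F 1 0))) Z = pd 0 0 (pd 1 0 (pd 1 1 (F 1 0))) Z := (Tswap12 hU hF hZ 1 0 0 0 1 1 1 0)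
  rw [h10]
  have h11 : pd 1 0 (pd 0 1 (pd 0 1 (F 0 1))) Z = pd 0 1 (pd 0 1 (pd 1 0 (F 0 1))) Z := ((Tswap12 hU hF hZ 1 0 0 1 0 1 0 1).trans (Tswap23 hU hF hZ 0 1 1 0 0 1 0 1))
  rw [h11]
  have h12 : pd 1 0 (pd 0 1 (pd 1 0 (F 1 0))) Z = pd 0 1 (pd 1 0 (pd 1 0 (F 1 0))) Z := (Tswap12 hU hF hZ 1 0 0 1 1 0 1 0)
  rw [h12]
  have h13 : pd 1 0 (pd 0 1 (pd 1 1 (F 1 1))) Z = pd 0 1 (pd 1 0 (pd 1 1 (F 1 1))) Z := (Tswap12 hU hF hZ 1 0 0 1 1 1 1 1)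
  rw [h13]
  have h14 : pd 1 0 (pd 1 1 (pd 0 0 (F 1 0))) Z = pd 0 0 (pd 1 0 (pd 1 1 (F 1 0))) Z := ((Tswap23 hU hF hZ 1 0 1 1 0 0 1 0).trans (Tswap12 hU hF hZ 1 0 0 0 1 1 1 0))
  rw [h14]
  have h15 : pd 1 0 (pd 1 1 (pd 0 1 (F 1 1))) Z = pd 0 1 (pd 1 0 (pd 1 1 (F 1 1))) Z := ((Tswap23 hU hF hZ 1 0 1 1 0 1 1 1).trans (Tswap12 hU hF hZ 1 0 0 1 1 1 1 1))
  rw [h15]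
  have h16 : pd 1 1 (pd 0 0 (pd 0 0 (F 0 0))) Z = pd 0 0 (pd 0 0 (pd 1 1 (F 0 0))) Z := ((Tswap12 hU hF hZ 1 1 0 0 0 0 0 0).trans (Tswap23 hU hF hZ 0 0 1 1 0 0 0 0))
  rw [h16]
  have h17 : pd 1 1 (pd 0 0 (pd 1 0 (F 1 0))) Z = pd 0 0 (pd 1 0 (pd 1 1 (F 1 0))) Z := ((Tswap12 hU hF hZ 1 1 0 0 1 0 1 0).trans (Tswap23 hU hF hZ 0 0 1 1 1 0 1 0))
  rw [h17]
  have h18 : pd 1 1 (pd 0 0 (pd 1 1 (F 1 1))) Z = pd 0 0 (pd 1 1 (pd 1 1 (F 1 1))) Z := (Tswap12 hU hF hZ 1 1 0 0 1 1 1 1)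
  rw [h18]
  have h19 : pd 1 1 (pd 0 1 (pd 0 0 (F 0 1))) Z = pd 0 0 (pd 0 1 (pd 1 1 (F 0 1))) Z := (((Tswap12 hU hF hZ 1 1 0 1 0 0 0 1).trans (Tswap23 hU hF hZ 0 1 1 1 0 0 0 1)).trans (Tswap12 hU hF hZ 0 1 0 0 1 1 0 1))
  rw [h19]
  have h20 : pd 1 1 (pd 0 1 (pd 1 0 (F 1 1))) Z = pd 0 1 (pd 1 0 (pd 1 1 (F 1 1))) Z := ((Tswap12 hU hF hZ 1 1 0 1 1 0 1 1).trans (Tswap23 hU hF hZ 0 1 1 1 1 0 1 1))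
  rw [h20]
  have h21 : pd 1 1 (pd 1 0 (pd 0 0 (F 1 0))) Z = pd 0 0 (pd 1 0 (pd 1 1 (F 1 0))) Z := (((Tswap12 hU hF hZ 1 1 1 0 0 0 1 0).trans (Tswap23 hU hF hZ 1 0 1 1 0 0 1 0)).trans (Tswap12 hU hF hZ 1 0 0 0 1 1 1 0))
  rw [h21]
  have h22 : pd 1 1 (pd 1 0 (pd 0 1 (F 1 1))) Z = pd 0 1 (pd 1 0 (pd 1 1 (F 1 1))) Z := (((Tswap12 hU hF hZ 1 1 1 0 0 1 1 1).trans (Tswap23 hU hF hZ 1 0 1 1 0 1 1 1)).trans (Tswap12 hU hF hZ 1 0 0 1 1 1 1 1))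
  rw [h22]

  ring
end
end

section
/- Let U ⊂ ℝⁿ be an open star-shaped set centered at the origin and let φ: U → ℂ be a C¹ function. Define ψ(x) = ∫₀¹ t·φ(tx) dt. Then ψ is C¹ on U and satisfies (E + 2)ψ = φ, where E = Σᵢ xᵢ ∂/∂xᵢ is the Euler operator; that is, Σᵢ xᵢ ∂ψ/∂xᵢ(x) + 2ψ(x) = φ(x) for all x ∈ U. -/
/-!
For `ψ_k(x) = ∫₀¹ t^k φ(t x) dt`, differentiating under the integral sign gives
`Dψ_k(x) = ∫₀¹ t^(k+1) Dφ(t x) dt`, so that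
`Dψ_k(x) x + (k + 1) ψ_k(x) = ∫₀¹ d/dt [t^(k+1) φ(t x)] dt = φ(x)`.
Near a point `x₀ ∈ U` all segments `[0, x]` lie in a compact thickening of `[0, x₀]` inside `U`,
on which `Dφ` is bounded; this bound dominates both the differentiation under the integral sign
and the continuity of `Dψ_k`. The theorem is the case `k = 1`.
-/

noncomputable section

/-- Partial derivative in the i-th coordinate direction on ℝⁿ. -/
noncomputable def pdn {n : ℕ} (i : Fin n) (f : (Fin n → ℝ) → ℂ) : (Fin n → ℝ) → ℂ :=
  fun x => fderiv ℝ f x (Pi.single i 1)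

open Set Filter Topology MeasureTheory
open scoped Interval

variable {E F G : Type*} [NormedAddCommGroup E] [NormedSpace ℝ E]
  [NormedAddCommGroup F] [NormedSpace ℝ F] [NormedAddCommGroup G]

theorem ContinuousLinearMap.sum_smul_apply_single {ι : Type*} [Fintype ι] [DecidableEq ι]
    (L : (ι → ℝ) →L[ℝ] F) (x : ι → ℝ) : ∑ i, x i • L (Pi.single i 1) = L x := by
  conv_rhs => rw [← Finset.univ_sum_single x]
  rw [map_sum]
  refine Finset.sum_congr rfl fun i _ => ?_
  rw [← map_smul, ← Pi.single_smul, smul_eq_mul, mul_one]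

theorem exists_ball_forall_smul_mem_norm_le [ProperSpace E] {U : Set E} (hU : IsOpen U)
    {g : E → G} (hg : ContinuousOn g U) {x₀ : E} (hx₀ : ∀ t ∈ Icc (0 : ℝ) 1, t • x₀ ∈ U) :
    ∃ ε > 0, ∃ C, ∀ x ∈ Metric.ball x₀ ε, ∀ t ∈ Icc (0 : ℝ) 1, t • x ∈ U ∧ ‖g (t • x)‖ ≤ C := by
  set S := (· • x₀) '' Icc (0 : ℝ) 1
  have hS : IsCompact S := isCompact_Icc.image (continuous_id.smul continuous_const)
  obtain ⟨ε, hε, hεU⟩ := hS.exists_cthickening_subset_open hU (image_subset_iff.2 hx₀)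
  obtain ⟨C, hC⟩ := hS.cthickening.exists_bound_of_continuousOn (hg.mono hεU)
  have hmem : ∀ x ∈ Metric.ball x₀ ε, ∀ t ∈ Icc (0 : ℝ) 1, t • x ∈ Metric.cthickening ε S := by
    intro x hx t ht
    refine Metric.mem_cthickening_of_dist_le _ (t • x₀) ε S ⟨t, ht, rfl⟩ ?_
    calc dist (t • x) (t • x₀) = |t| * dist x x₀ := by rw [dist_smul₀, Real.norm_eq_abs]
      _ ≤ 1 * ε := by
        gcongr
        · exact abs_le.2 ⟨by linarith [ht.1], ht.2⟩
        · exact (Metric.mem_ball.1 hx).le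
      _ = ε := one_mul ε
  exact ⟨ε, hε, C, fun x hx t ht => ⟨hεU (hmem x hx t ht), hC _ (hmem x hx t ht)⟩⟩

variable [NormedSpace ℝ G]

section Segment

variable {g : E → G} {U : Set E} {x : E} {w : ℝ → ℝ}

theorem intervalIntegrable_smul_comp_smul (hg : ContinuousOn g U) (hw : Continuous w)
    (hx : ∀ t ∈ Icc (0 : ℝ) 1, t • x ∈ U) :
    IntervalIntegrable (fun t : ℝ => w t • g (t • x)) volume 0 1 := by
  refine ContinuousOn.intervalIntegrable ?_
  rw [uIcc_of_le zero_le_one]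
  exact hw.continuousOn.smul (hg.comp (continuous_id.smul continuous_const).continuousOn hx)

theorem aestronglyMeasurable_smul_comp_smul (hg : ContinuousOn g U) (hw : Continuous w)
    (hx : ∀ t ∈ Icc (0 : ℝ) 1, t • x ∈ U) :
    AEStronglyMeasurable (fun t : ℝ => w t • g (t • x)) (volume.restrict (Ι 0 1)) :=
  (intervalIntegrable_smul_comp_smul hg hw hx).def'.aestronglyMeasurable

theorem continuousAt_integral_smul_comp_smul [ProperSpace E] (hU : IsOpen U)
    (hg : ContinuousOn g U) (hw : Continuous w) (hx : ∀ t ∈ Icc (0 : ℝ) 1, t • x ∈ U) :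
    ContinuousAt (fun y => ∫ t in (0 : ℝ)..1, w t • g (t • y)) x := by
  obtain ⟨ε, hε, C, hC⟩ := exists_ball_forall_smul_mem_norm_le hU hg hx
  have hball : ∀ᶠ y in 𝓝 x, y ∈ Metric.ball x ε := Metric.ball_mem_nhds x hε
  have hbound : Continuous fun t => |w t| * C := hw.abs.mul continuous_const
  refine intervalIntegral.continuousAt_of_dominated_interval
    (hball.mono fun y hy => aestronglyMeasurable_smul_comp_smul hg hw fun t ht => (hC y hy t ht).1)
    (hball.mono fun y hy => ae_of_all _ fun t ht => ?_) (hbound.intervalIntegrable 0 1)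
    (ae_of_all _ fun t ht => ?_)
  all_goals rw [uIoc_of_le zero_le_one] at ht
  · rw [norm_smul, Real.norm_eq_abs]
    exact mul_le_mul_of_nonneg_left (hC y hy t (Ioc_subset_Icc_self ht)).2 (abs_nonneg _)
  · have htx : t • x ∈ U := hx t (Ioc_subset_Icc_self ht)
    exact continuousAt_const.smul
      ((hg.continuousAt (hU.mem_nhds htx)).comp (continuous_const_smul t).continuousAt)

end Segment

section RadialIntegral

variable {φ : E → F} {U : Set E}

def radialIntegral (k : ℕ) (φ : E → F) (x : E) : F :=
  ∫ t in (0 : ℝ)..1, t ^ k • φ (t • x)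

theorem hasFDerivAt_pow_smul_comp_smul {φ' : E →L[ℝ] F} {x : E} (k : ℕ) (t : ℝ)
    (hφ : HasFDerivAt φ φ' (t • x)) :
    HasFDerivAt (fun y => t ^ k • φ (t • y)) (t ^ (k + 1) • φ') x := by
  refine ((hφ.comp x (t • ContinuousLinearMap.id ℝ E).hasFDerivAt).const_smul
    (t ^ k)).congr_fderiv ?_
  ext v
  simp [pow_succ, mul_smul]

theorem hasDerivAt_pow_succ_smul_comp_smul {φ' : E →L[ℝ] F} {x : E} (k : ℕ) (t : ℝ)
    (hφ : HasFDerivAt φ φ' (t • x)) :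
    HasDerivAt (fun s : ℝ => s ^ (k + 1) • φ (s • x))
      (((k + 1) * t ^ k) • φ (t • x) + t ^ (k + 1) • φ' x) t := by
  have hpow : HasDerivAt (fun s : ℝ => s ^ (k + 1)) ((k + 1) * t ^ k) t := by
    simpa using hasDerivAt_pow (k + 1) t
  have hline : HasDerivAt (fun s : ℝ => s • x) x t := by
    simpa using (hasDerivAt_id t).smul_const x
  exact (hpow.smul (hφ.comp_hasDerivAt t hline)).congr_deriv (add_comm _ _)

theorem hasFDerivAt_radialIntegral [ProperSpace E] (hU : IsOpen U) (hφ : ContDiffOn ℝ 1 φ U)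
    (k : ℕ) {x : E} (hx : ∀ t ∈ Icc (0 : ℝ) 1, t • x ∈ U) :
    HasFDerivAt (radialIntegral k φ) (∫ t in (0 : ℝ)..1, t ^ (k + 1) • fderiv ℝ φ (t • x)) x := by
  have hφ' : ContinuousOn (fderiv ℝ φ) U := hφ.continuousOn_fderiv_of_isOpen hU le_rfl
  obtain ⟨ε, hε, C, hC⟩ := exists_ball_forall_smul_mem_norm_le hU hφ' hx
  have hball : ∀ᶠ y in 𝓝 x, y ∈ Metric.ball x ε := Metric.ball_mem_nhds x hε
  have hIcc : ∀ t ∈ Ι (0 : ℝ) 1, t ∈ Icc (0 : ℝ) 1 := fun t ht => by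
    rw [uIoc_of_le zero_le_one] at ht
    exact Ioc_subset_Icc_self ht
  have hbound : Continuous fun t : ℝ => |t ^ (k + 1)| * C :=
    (continuous_pow (k + 1)).abs.mul continuous_const
  refine hasFDerivAt_integral_of_dominated_of_fderiv_le'' (Metric.ball_mem_nhds x hε)
    (F' := fun y t => t ^ (k + 1) • fderiv ℝ φ (t • y))
    (hball.mono fun y hy => aestronglyMeasurable_smul_comp_smul hφ.continuousOn
      (continuous_pow k) fun t ht => (hC y hy t ht).1)
    (intervalIntegrable_smul_comp_smul hφ.continuousOn (continuous_pow k) hx)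
    (aestronglyMeasurable_smul_comp_smul hφ' (continuous_pow (k + 1)) hx)
    (ae_restrict_of_forall_mem measurableSet_uIoc fun t ht y hy => ?_)
    (hbound.intervalIntegrable 0 1)
    (ae_restrict_of_forall_mem measurableSet_uIoc fun t ht y hy => ?_)
  · rw [norm_smul, Real.norm_eq_abs]
    exact mul_le_mul_of_nonneg_left (hC y hy t (hIcc t ht)).2 (abs_nonneg _)
  · have hty : t • y ∈ U := (hC y hy t (hIcc t ht)).1
    exact hasFDerivAt_pow_smul_comp_smul k t
      ((hφ.differentiableOn one_ne_zero).differentiableAt (hU.mem_nhds hty)).hasFDerivAt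

theorem contDiffOn_radialIntegral [ProperSpace E] (hU : IsOpen U)
    (hstar : ∀ x ∈ U, ∀ t ∈ Icc (0 : ℝ) 1, t • x ∈ U) (hφ : ContDiffOn ℝ 1 φ U) (k : ℕ) :
    ContDiffOn ℝ 1 (radialIntegral k φ) U := by
  have hderiv := fun x hx => hasFDerivAt_radialIntegral hU hφ k (hstar x hx)
  have hcont : ContinuousOn (fun x => ∫ t in (0 : ℝ)..1, t ^ (k + 1) • fderiv ℝ φ (t • x)) U :=
    fun x hx => (continuousAt_integral_smul_comp_smul hU
      (hφ.continuousOn_fderiv_of_isOpen hU le_rfl) (continuous_pow (k + 1))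
      (hstar x hx)).continuousWithinAt
  rw [← zero_add 1, contDiffOn_succ_iff_fderiv_of_isOpen hU, contDiffOn_zero]
  exact ⟨fun x hx => (hderiv x hx).differentiableAt.differentiableWithinAt, by simp,
    hcont.congr fun x hx => (hderiv x hx).fderiv⟩

theorem fderiv_radialIntegral_apply_self_add [CompleteSpace F] [ProperSpace E] (hU : IsOpen U)
    (hφ : ContDiffOn ℝ 1 φ U) (k : ℕ) {x : E} (hx : ∀ t ∈ Icc (0 : ℝ) 1, t • x ∈ U) :
    fderiv ℝ (radialIntegral k φ) x x + ((k : ℝ) + 1) • radialIntegral k φ x = φ x := by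
  have hφ' : ContinuousOn (fderiv ℝ φ) U := hφ.continuousOn_fderiv_of_isOpen hU le_rfl
  have hD := intervalIntegrable_smul_comp_smul hφ' (continuous_pow (k + 1)) hx
  have hDx := intervalIntegrable_smul_comp_smul (hφ'.clm_apply continuousOn_const)
    (g := fun y => fderiv ℝ φ y x) (continuous_pow (k + 1)) hx
  have hP := intervalIntegrable_smul_comp_smul hφ.continuousOn
    (w := fun t => ((k : ℝ) + 1) * t ^ k) (by fun_prop) hx
  have hFTC := intervalIntegral.integral_eq_sub_of_hasDerivAt
    (fun t ht => hasDerivAt_pow_succ_smul_comp_smul k t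
      (((hφ.differentiableOn one_ne_zero).differentiableAt
        (hU.mem_nhds (hx t (by rwa [uIcc_of_le zero_le_one] at ht)))).hasFDerivAt))
    (hP.add hDx)
  rw [intervalIntegral.integral_add hP hDx] at hFTC
  simp only [mul_smul, intervalIntegral.integral_smul, one_pow, one_smul, ne_eq, add_eq_zero,
    one_ne_zero, and_false, not_false_eq_true, zero_pow, zero_smul, sub_zero] at hFTC
  rw [(hasFDerivAt_radialIntegral hU hφ k hx).fderiv,
    ContinuousLinearMap.intervalIntegral_apply hD, radialIntegral, ← hFTC, add_comm]
  rfl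

end RadialIntegral

/-- on an open star-shaped set U centered at the origin, for a C¹ function φ,
the function ψ(x) = ∫₀¹ t·φ(tx) dt is C¹ and satisfies (E + 2)ψ = φ,
where E = Σᵢ xᵢ ∂/∂xᵢ is the Euler operator. -/
theorem stmt13 (n : ℕ) (U : Set (Fin n → ℝ)) (hU : IsOpen U)
    (hstar : ∀ x ∈ U, ∀ t : ℝ, t ∈ Set.Icc (0 : ℝ) 1 → t • x ∈ U)
    (φ : (Fin n → ℝ) → ℂ) (hφ : ContDiffOn ℝ 1 φ U) :
    ContDiffOn ℝ 1 (fun x => ∫ t in (0 : ℝ)..1, (t : ℂ) * φ (t • x)) U ∧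
    ∀ x ∈ U,
      (∑ i : Fin n, (x i : ℂ) *
          pdn i (fun y => ∫ t in (0 : ℝ)..1, (t : ℂ) * φ (t • y)) x) +
        2 * (∫ t in (0 : ℝ)..1, (t : ℂ) * φ (t • x)) = φ x := by
  have hψ (x) : ∫ t in (0 : ℝ)..1, (t : ℂ) * φ (t • x) = radialIntegral 1 φ x := by
    simp only [radialIntegral, pow_one, Complex.real_smul]
  simp only [hψ]
  refine ⟨contDiffOn_radialIntegral hU hstar hφ 1, fun x hx => ?_⟩
  have hEuler := fderiv_radialIntegral_apply_self_add hU hφ 1 (hstar x hx)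
  have hsum :
      ∑ i, (x i : ℂ) * pdn i (radialIntegral 1 φ) x = fderiv ℝ (radialIntegral 1 φ) x x := by
    simp only [pdn, ← Complex.real_smul]
    exact ContinuousLinearMap.sum_smul_apply_single _ x
  rw [hsum, ← hEuler, Complex.real_smul]
  norm_num
end
end

section
/- For every complex number z not lying in the ray [0,∞), the dilogarithm satisfies Li₂(z) + Li₂(1/z) = −π²/6 − (1/2)·log²(−z), where Li₂ is the analytic continuation of Σ_{k≥1} z^k/k² to ℂ ∖ [1,∞) and log is the principal branch of the logarithm (so that −z avoids the cut). -/
open Complex Set Filter Topology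

noncomputable section


lemma isOpenD : IsOpen {z : ℂ | ¬(z.im = 0 ∧ 1 ≤ z.re)} := by
  have : {z : ℂ | ¬(z.im = 0 ∧ 1 ≤ z.re)} = ({z : ℂ | z.im = 0} ∩ {z : ℂ | 1 ≤ z.re})ᶜ := by
    ext w; simp [mem_setOf_eq]
  rw [this]
  exact ((isClosed_eq continuous_im continuous_const).inter
    (isClosed_le continuous_const continuous_re)).isOpen_compl

lemma starConvex_isPreconnected {x : ℂ} {s : Set ℂ} (h : StarConvex ℝ x s) (hx : x ∈ s) :
    IsPreconnected s :=
  (IsPathConnected.isConnected ⟨x, hx, fun {y} hy =>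
    JoinedIn.of_segment_subset (h.segment_subset hy)⟩).isPreconnected

lemma starD : StarConvex ℝ (0 : ℂ) {z : ℂ | ¬(z.im = 0 ∧ 1 ≤ z.re)} := by
  intro y hy a b ha hb hab
  simp only [mem_setOf_eq, not_and, not_le] at hy ⊢
  intro him
  simp only [smul_zero, zero_add, Complex.real_smul, Complex.mul_im, Complex.ofReal_re,
    Complex.ofReal_im, Complex.mul_re] at him ⊢
  rcases eq_or_ne b 0 with hb0 | hb0
  · simp [hb0]
  · have hyim : y.im = 0 := by
      have hb' : b * y.im = 0 := by linarith
      rcases mul_eq_zero.1 hb' with h | h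
      · exact absurd h hb0
      · exact h
    have hre : y.re < 1 := hy hyim
    have hb1 : b ≤ 1 := by linarith
    have hbpos : 0 < b := lt_of_le_of_ne hb hb0.symm
    nlinarith

-- derivative of the defining series inside the unit ball
lemma deriv_series (w : ℂ) (hw : ‖w‖ < 1) :
    HasDerivAt (fun z : ℂ => ∑' k : ℕ, z ^ (k + 1) / ((k : ℂ) + 1) ^ 2)
      (∑' k : ℕ, w ^ k / ((k : ℂ) + 1)) w := by
  set r : ℝ := (1 + ‖w‖) / 2 with hr
  have hr0 : 0 < r := by positivity
  have hr1 : r < 1 := by rw [hr]; linarith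
  have hwr : w ∈ Metric.ball (0 : ℂ) r := by
    rw [mem_ball_zero_iff]; rw [hr]; linarith [norm_nonneg w]
  apply hasDerivAt_tsum_of_isPreconnected
    (u := fun k : ℕ => r ^ k) (g' := fun (k : ℕ) (y : ℂ) => y ^ k / ((k : ℂ) + 1))
    (summable_geometric_of_lt_one hr0.le hr1) Metric.isOpen_ball
    (convex_ball _ _).isPreconnected ?_ ?_ (Metric.mem_ball_self hr0) ?_ hwr
  · intro k y _
    have hk : ((k : ℂ) + 1) ≠ 0 := by
      have : ((k + 1 : ℕ) : ℂ) ≠ 0 := Nat.cast_ne_zero.2 (Nat.succ_ne_zero k)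
      push_cast at this; exact this
    have h := (hasDerivAt_pow (k + 1) y).div_const (((k : ℂ) + 1) ^ 2)
    convert h using 1
    push_cast
    rfl
    simp only [Nat.add_sub_cancel]
    push_cast
    rw [div_eq_div_iff hk (pow_ne_zero 2 hk)]
    ring
  · intro k y hy
    rw [mem_ball_zero_iff] at hy
    have h1 : ‖y ^ k / ((k : ℂ) + 1)‖ = ‖y‖ ^ k / ((k : ℝ) + 1) := by
      rw [norm_div, norm_pow]
      congr 1
      have : ((k : ℂ) + 1) = ((k + 1 : ℕ) : ℂ) := by push_cast; ring
      rw [this, Complex.norm_natCast]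
      push_cast; ring
    rw [h1]
    have hk1 : (1 : ℝ) ≤ (k : ℝ) + 1 := by
      have : (0:ℝ) ≤ (k:ℝ) := Nat.cast_nonneg k
      linarith
    calc ‖y‖ ^ k / ((k : ℝ) + 1) ≤ ‖y‖ ^ k / 1 := by
          apply div_le_div_of_nonneg_left (by positivity) one_pos hk1
      _ = ‖y‖ ^ k := by ring
      _ ≤ r ^ k := pow_le_pow_left₀ (norm_nonneg y) hy.le k
  · apply summable_zero.congr
    intro k
    simp

lemma tsum_deriv_eq (w : ℂ) (hw : ‖w‖ < 1) (hw0 : w ≠ 0) :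
    (∑' k : ℕ, w ^ k / ((k : ℂ) + 1)) = -Complex.log (1 - w) / w := by
  have h1 := Complex.hasSum_taylorSeries_neg_log hw
  have h2 : HasSum (fun k : ℕ => w ^ (k + 1) / ((k : ℂ) + 1)) (-Complex.log (1 - w)) := by
    have h := (hasSum_nat_add_iff' (f := fun n : ℕ => w ^ n / (n : ℂ)) 1).mpr h1
    simp only [Finset.range_one, Finset.sum_singleton, Nat.cast_zero, pow_zero] at h
    norm_num at h
    apply h.congr_fun
    intro k
    push_cast
    ring
  have h3 := h2.div_const w
  have h4 : HasSum (fun k : ℕ => w ^ k / ((k : ℂ) + 1)) (-Complex.log (1 - w) / w) := by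
    apply h3.congr_fun
    intro k
    have hk : ((k : ℂ) + 1) ≠ 0 := by
      have : ((k + 1 : ℕ) : ℂ) ≠ 0 := Nat.cast_ne_zero.2 (Nat.succ_ne_zero k)
      push_cast at this; exact this
    rw [pow_succ]
    field_simp
  exact h4.tsum_eq


lemma isOpenO : IsOpen {z : ℂ | ¬(z.im = 0 ∧ 0 ≤ z.re)} := by
  have : {z : ℂ | ¬(z.im = 0 ∧ 0 ≤ z.re)} = ({z : ℂ | z.im = 0} ∩ {z : ℂ | 0 ≤ z.re})ᶜ := by
    ext w; simp [mem_setOf_eq]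
  rw [this]
  exact ((isClosed_eq continuous_im continuous_const).inter
    (isClosed_le continuous_const continuous_re)).isOpen_compl

lemma starO : StarConvex ℝ (-1 : ℂ) {z : ℂ | ¬(z.im = 0 ∧ 0 ≤ z.re)} := by
  intro y hy a b ha hb hab
  simp only [mem_setOf_eq, not_and, not_le] at hy ⊢
  intro him
  simp only [Complex.real_smul, Complex.add_im, Complex.mul_im, Complex.ofReal_re,
    Complex.ofReal_im, Complex.neg_im, Complex.neg_re, Complex.one_im, Complex.one_re,
    Complex.add_re, Complex.mul_re] at him ⊢
  rcases eq_or_ne b 0 with hb0 | hb0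
  · simp [hb0] at him ⊢; nlinarith
  · have hyim : y.im = 0 := by
      have hb' : b * y.im = 0 := by linarith
      rcases mul_eq_zero.1 hb' with h | h
      · exact absurd h hb0
      · exact h
    have hre : y.re < 0 := hy hyim
    have hbpos : 0 < b := lt_of_le_of_ne hb hb0.symm
    nlinarith

lemma hasSum_alt_real :
    HasSum (fun k : ℕ => (-1 : ℝ) ^ (k + 1) / ((k : ℝ) + 1) ^ 2) (-(Real.pi ^ 2 / 12)) := by
  set p : ℕ → ℝ := fun k => (1 : ℝ) / ((k : ℝ) + 1) ^ 2 with hp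
  have hT : HasSum p (Real.pi ^ 2 / 6) := by
    have h := (hasSum_nat_add_iff' (f := fun n : ℕ => (1 : ℝ) / (n : ℝ) ^ 2) 1).mpr
      hasSum_zeta_two
    simp only [Finset.range_one, Finset.sum_singleton, Nat.cast_zero] at h
    norm_num at h
    apply h.congr_fun
    intro n; simp [hp, one_div]
  have hOdd : HasSum (fun m : ℕ => p (2 * m + 1)) (Real.pi ^ 2 / 24) := by
    have h := hT.mul_left (1 / 4)
    have h24 : (1 / 4 : ℝ) * (Real.pi ^ 2 / 6) = Real.pi ^ 2 / 24 := by ring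
    rw [h24] at h
    apply h.congr_fun
    intro m
    simp only [hp]
    push_cast
    field_simp
    ring
  have hEvenS : Summable (fun m : ℕ => p (2 * m)) := by
    have hinj : Function.Injective (fun m : ℕ => 2 * m) := fun a b h => by
      simpa using h
    exact hT.summable.comp_injective hinj
  obtain ⟨E, hEven⟩ := hEvenS
  have htot : HasSum p (E + Real.pi ^ 2 / 24) := HasSum.even_add_odd hEven hOdd
  have hE : E = Real.pi ^ 2 / 8 := by
    have := htot.unique hT; linarith
  subst hE
  have goalEven : HasSum (fun m : ℕ => (-1 : ℝ) ^ (2 * m + 1) / (((2 * m : ℕ) : ℝ) + 1) ^ 2)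
      (-(Real.pi ^ 2 / 8)) := by
    apply hEven.neg.congr_fun
    intro m
    simp [hp, Odd.neg_one_pow (⟨m, by ring⟩ : Odd (2 * m + 1)), neg_div]
  have goalOdd : HasSum
      (fun m : ℕ => (-1 : ℝ) ^ (2 * m + 1 + 1) / (((2 * m + 1 : ℕ) : ℝ) + 1) ^ 2)
      (Real.pi ^ 2 / 24) := by
    apply hOdd.congr_fun
    intro m
    simp [hp, Even.neg_one_pow (⟨m + 1, by ring⟩ : Even (2 * m + 1 + 1))]
  have := HasSum.even_add_odd (f := fun k : ℕ => (-1 : ℝ) ^ (k + 1) / ((k : ℝ) + 1) ^ 2)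
    goalEven goalOdd
  convert this using 1
  ring

lemma hasSum_alt_complex :
    HasSum (fun k : ℕ => (-1 : ℂ) ^ (k + 1) / ((k : ℂ) + 1) ^ 2) (-((Real.pi : ℂ) ^ 2 / 12)) := by
  have h := Complex.hasSum_ofReal.mpr hasSum_alt_real
  have : ((-(Real.pi ^ 2 / 12) : ℝ) : ℂ) = -((Real.pi : ℂ) ^ 2 / 12) := by push_cast; ring
  rw [this] at h
  apply h.congr_fun
  intro k
  push_cast
  ring

lemma preO : IsPreconnected {z : ℂ | ¬(z.im = 0 ∧ 0 ≤ z.re)} :=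
  starConvex_isPreconnected starO (by norm_num)

section main
variable (Li2 : ℂ → ℂ)
    (hana : DifferentiableOn ℂ Li2 {z : ℂ | ¬(z.im = 0 ∧ 1 ≤ z.re)})
    (hser : ∀ z : ℂ, ‖z‖ < 1 → Li2 z = ∑' k : ℕ, z ^ (k + 1) / ((k : ℂ) + 1) ^ 2)

-- Li2 has the series derivative everywhere in the ball
include hser in
lemma Li2_deriv_ball (w : ℂ) (hw : ‖w‖ < 1) :
    HasDerivAt Li2 (∑' k : ℕ, w ^ k / ((k : ℂ) + 1)) w := by
  apply (deriv_series w hw).congr_of_eventuallyEq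
  filter_upwards [Metric.isOpen_ball.mem_nhds (mem_ball_zero_iff.2 hw)] with x hx
  exact hser x (mem_ball_zero_iff.1 hx)

include hana hser in
lemma Li2_key : EqOn (fun w : ℂ => w * deriv Li2 w) (fun w => -Complex.log (1 - w))
    {z : ℂ | ¬(z.im = 0 ∧ 1 ≤ z.re)} := by
  have hD := isOpenD
  have hLana : AnalyticOnNhd ℂ Li2 {z : ℂ | ¬(z.im = 0 ∧ 1 ≤ z.re)} := hana.analyticOnNhd hD
  have hA : AnalyticOnNhd ℂ (fun w : ℂ => w * deriv Li2 w) {z : ℂ | ¬(z.im = 0 ∧ 1 ≤ z.re)} :=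
    (analyticOnNhd_id).mul hLana.deriv
  have hB : AnalyticOnNhd ℂ (fun w : ℂ => -Complex.log (1 - w))
      {z : ℂ | ¬(z.im = 0 ∧ 1 ≤ z.re)} := by
    intro w hw
    have h1 : (1 - w) ∈ Complex.slitPlane := by
      simp only [mem_setOf_eq, not_and, not_le] at hw
      rcases eq_or_ne w.im 0 with him | him
      · exact Or.inl (by simp [Complex.sub_re]; linarith [hw him])
      · exact Or.inr (by simp [Complex.sub_im]; exact him)
    exact (((analyticAt_clog h1).comp
      ((analyticAt_const).sub analyticAt_id)).neg)
  have h0D : (0 : ℂ) ∈ {z : ℂ | ¬(z.im = 0 ∧ 1 ≤ z.re)} := by norm_num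
  apply hA.eqOn_of_preconnected_of_eventuallyEq hB (starConvex_isPreconnected starD h0D) h0D
  filter_upwards [Metric.isOpen_ball.mem_nhds (mem_ball_zero_iff.2 (by norm_num : ‖(0:ℂ)‖ < 1))]
    with x hx
  rw [mem_ball_zero_iff] at hx
  have hd := Li2_deriv_ball Li2 hser x hx
  rcases eq_or_ne x 0 with rfl | hx0
  · simp
  · have : deriv Li2 x = -Complex.log (1 - x) / x := by
      rw [hd.deriv, tsum_deriv_eq x hx hx0]
    simp only [this]
    field_simp

include hana hser in
lemma Li2_hasDeriv (w : ℂ) (hw : w ∈ {z : ℂ | ¬(z.im = 0 ∧ 1 ≤ z.re)}) (hw0 : w ≠ 0) :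
    HasDerivAt Li2 (-Complex.log (1 - w) / w) w := by
  have hdiff : DifferentiableAt ℂ Li2 w := hana.differentiableAt (isOpenD.mem_nhds hw)
  have hkey := Li2_key Li2 hana hser hw
  simp only at hkey
  have : deriv Li2 w = -Complex.log (1 - w) / w := by
    field_simp
    rw [mul_comm]
    exact hkey
  rw [← this]
  exact hdiff.hasDerivAt

include hana hser in
lemma Li2_neg_one : Li2 (-1) = -((Real.pi : ℂ) ^ 2 / 12) := by
  have hD : (-1 : ℂ) ∈ {z : ℂ | ¬(z.im = 0 ∧ 1 ≤ z.re)} := by norm_num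
  have hcont : ContinuousAt Li2 (-1) :=
    (hana.differentiableAt (isOpenD.mem_nhds hD)).continuousAt
  set g : ℂ → ℂ := fun z => ∑' k : ℕ, z ^ (k + 1) / ((k : ℂ) + 1) ^ 2 with hg
  have hgc : ContinuousOn g (Metric.closedBall (0 : ℂ) 1) := by
    apply continuousOn_tsum (u := fun k : ℕ => 1 / ((k : ℝ) + 1) ^ 2)
    · intro k; exact (continuous_pow (k + 1)).continuousOn.div_const _
    · have h2 : Summable (fun n : ℕ => 1 / ((n : ℝ)) ^ 2) :=
        (by exact Real.summable_one_div_nat_pow.mpr one_lt_two)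
      have h3 := (summable_nat_add_iff 1).2 h2
      apply h3.congr
      intro k
      push_cast
      ring
    · intro k x hx
      rw [Metric.mem_closedBall, dist_zero_right] at hx
      have hk : ((k : ℂ) + 1) = ((k + 1 : ℕ) : ℂ) := by push_cast; ring
      rw [norm_div, norm_pow, hk, norm_pow, Complex.norm_natCast]
      push_cast
      gcongr
      · exact pow_le_one₀ (norm_nonneg x) hx
  have hmem : (-1 : ℂ) ∈ Metric.closedBall (0 : ℂ) 1 := by
    rw [Metric.mem_closedBall, dist_zero_right]; simp
  have hne : (𝓝[Metric.ball (0:ℂ) 1] (-1 : ℂ)).NeBot := by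
    rw [← mem_closure_iff_nhdsWithin_neBot, closure_ball (0 : ℂ) one_ne_zero]
    exact hmem
  have T1 : Filter.Tendsto Li2 (𝓝[Metric.ball (0:ℂ) 1] (-1 : ℂ)) (𝓝 (Li2 (-1))) :=
    hcont.continuousWithinAt.tendsto
  have T2 : Filter.Tendsto g (𝓝[Metric.ball (0:ℂ) 1] (-1 : ℂ)) (𝓝 (g (-1))) :=
    ((hgc.continuousWithinAt hmem).mono Metric.ball_subset_closedBall).tendsto
  have T2' : Filter.Tendsto Li2 (𝓝[Metric.ball (0:ℂ) 1] (-1 : ℂ)) (𝓝 (g (-1))) := by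
    apply T2.congr'
    filter_upwards [self_mem_nhdsWithin] with x hx
    exact (hser x (mem_ball_zero_iff.1 hx)).symm
  have : Li2 (-1) = g (-1) := tendsto_nhds_unique T1 T2'
  rw [this, hg]
  exact hasSum_alt_complex.tsum_eq

-- basic membership facts
lemma mem_facts (w : ℂ) (hw : ¬(w.im = 0 ∧ 0 ≤ w.re)) :
    w ≠ 0 ∧ w ∈ {z : ℂ | ¬(z.im = 0 ∧ 1 ≤ z.re)} ∧ ¬((w⁻¹).im = 0 ∧ 0 ≤ (w⁻¹).re) ∧
      w⁻¹ ∈ {z : ℂ | ¬(z.im = 0 ∧ 1 ≤ z.re)} ∧ (-w) ∈ Complex.slitPlane := by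
  simp only [not_and, not_le, mem_setOf_eq] at hw ⊢
  have hw0 : w ≠ 0 := by
    intro h
    rw [h] at hw
    have := hw (by simp)
    simp at this
  have hns : 0 < Complex.normSq w := Complex.normSq_pos.2 hw0
  have him : (w⁻¹).im = -w.im / Complex.normSq w := Complex.inv_im w
  have hre : (w⁻¹).re = w.re / Complex.normSq w := Complex.inv_re w
  refine ⟨hw0, ?_, ?_, ?_, ?_⟩
  · intro h; have := hw h; linarith
  · intro h
    rw [him] at h
    have hwim : w.im = 0 := by
      rcases div_eq_zero_iff.1 h with h' | h'
      · linarith [neg_eq_zero.1 h']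
      · exact absurd h' hns.ne'
    have h2 := hw hwim
    rw [hre]
    exact div_neg_of_neg_of_pos h2 hns
  · intro h
    rw [him] at h
    have hwim : w.im = 0 := by
      rcases div_eq_zero_iff.1 h with h' | h'
      · linarith [neg_eq_zero.1 h']
      · exact absurd h' hns.ne'
    have h2 := hw hwim
    rw [hre]
    have : w.re / Complex.normSq w < 0 := div_neg_of_neg_of_pos h2 hns
    linarith
  · rw [Complex.mem_slitPlane_iff]
    rcases eq_or_ne w.im 0 with h | h
    · exact Or.inl (by simp [Complex.neg_re]; linarith [hw h])
    · exact Or.inr (by simpa using h)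

lemma keylog (w : ℂ) (hw : ¬(w.im = 0 ∧ 0 ≤ w.re)) :
    Complex.log (1 - w) = Complex.log (1 - w⁻¹) + Complex.log (-w) := by
  obtain ⟨hw0, _, hwinv, _, _⟩ := mem_facts w hw
  have hns : 0 < Complex.normSq w := Complex.normSq_pos.2 hw0
  have hprod : (1 - w⁻¹) * (-w) = 1 - w := by field_simp; ring
  have h1 : (1 - w⁻¹) ≠ 0 := by
    intro h
    rw [sub_eq_zero] at h
    apply hwinv
    rw [← h]; norm_num
  have h2 : (-w) ≠ 0 := neg_ne_zero.2 hw0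
  have haim : (1 - w⁻¹).im = w.im / Complex.normSq w := by
    simp [Complex.sub_im, Complex.inv_im]; ring
  have hbim : (-w).im = -w.im := Complex.neg_im w
  have harg : Complex.arg (1 - w⁻¹) + Complex.arg (-w) ∈ Set.Ioc (-Real.pi) Real.pi := by
    rcases lt_trichotomy w.im 0 with him | him | him
    · have ha : Complex.arg (1 - w⁻¹) < 0 := Complex.arg_neg_iff.2 (by
        rw [haim]; exact div_neg_of_neg_of_pos him hns)
      have ha' : -Real.pi < Complex.arg (1 - w⁻¹) := Complex.neg_pi_lt_arg _
      have hb : 0 ≤ Complex.arg (-w) := Complex.arg_nonneg_iff.2 (by rw [hbim]; linarith)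
      have hb' : Complex.arg (-w) ≤ Real.pi := Complex.arg_le_pi _
      constructor <;> linarith
    · simp only [not_and, not_le] at hw
      have hwre : w.re < 0 := hw him
      have ha : Complex.arg (1 - w⁻¹) = 0 := Complex.arg_eq_zero_iff.2 ⟨by
          rw [Complex.sub_re, Complex.one_re, Complex.inv_re]
          have : w.re / Complex.normSq w < 0 := div_neg_of_neg_of_pos hwre hns
          linarith, by rw [haim, him]; simp⟩
      have hb : Complex.arg (-w) = 0 := Complex.arg_eq_zero_iff.2 ⟨by
          rw [Complex.neg_re]; linarith, by rw [hbim, him]; simp⟩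
      rw [ha, hb]
      constructor
      · linarith [Real.pi_pos]
      · linarith [Real.pi_pos]
    · have ha : 0 ≤ Complex.arg (1 - w⁻¹) := Complex.arg_nonneg_iff.2 (by
        rw [haim]; positivity)
      have ha' : Complex.arg (1 - w⁻¹) ≤ Real.pi := Complex.arg_le_pi _
      have hb : Complex.arg (-w) < 0 := Complex.arg_neg_iff.2 (by rw [hbim]; linarith)
      have hb' : -Real.pi < Complex.arg (-w) := Complex.neg_pi_lt_arg _
      constructor <;> linarith
  rw [← hprod]
  exact Complex.log_mul h1 h2 harg

include hana hser in
theorem stmt14' (z : ℂ) (hz : ¬(z.im = 0 ∧ 0 ≤ z.re)) :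
    Li2 z + Li2 z⁻¹ = -((Real.pi : ℂ) ^ 2 / 6) - (1 / 2) * Complex.log (-z) ^ 2 := by
  set Ω : Set ℂ := {z : ℂ | ¬(z.im = 0 ∧ 0 ≤ z.re)} with hΩ
  set F : ℂ → ℂ := fun w => Li2 w + Li2 w⁻¹ + (1 / 2) * Complex.log (-w) ^ 2 with hF
  have hF0 : ∀ w ∈ Ω, HasDerivAt F 0 w := by
    intro w hw
    obtain ⟨hw0, hwD, hwinvO, hwinvD, hwslit⟩ := mem_facts w hw
    have d1 := Li2_hasDeriv Li2 hana hser w hwD hw0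
    have d2 := (Li2_hasDeriv Li2 hana hser w⁻¹ hwinvD (inv_ne_zero hw0)).comp w (hasDerivAt_inv hw0)
    have d3 := (Complex.hasDerivAt_log hwslit).comp w (hasDerivAt_neg w)
    have d4 := HasDerivAt.const_mul (1 / 2 : ℂ) (d3.pow 2)
    have dtot : HasDerivAt F
        (-Complex.log (1 - w) / w + (-Complex.log (1 - w⁻¹) / w⁻¹ * -((w ^ 2)⁻¹)) +
          (1 / 2 : ℂ) * ((2 : ℕ) * Complex.log (-w) ^ (2 - 1) * ((-w)⁻¹ * -1))) w :=
      (d1.add d2).add d4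
    have hval : (-Complex.log (1 - w) / w + (-Complex.log (1 - w⁻¹) / w⁻¹ * -((w ^ 2)⁻¹)) +
        (1 / 2 : ℂ) * ((2 : ℕ) * Complex.log (-w) ^ (2 - 1) * ((-w)⁻¹ * -1))) = 0 := by
      rw [keylog w hw]
      field_simp
      ring
    rwa [hval] at dtot
  have hballΩ : Metric.ball (-1 : ℂ) 1 ⊆ Ω := by
    intro x hx
    rw [Metric.mem_ball, Complex.dist_eq] at hx
    simp only [hΩ, mem_setOf_eq, not_and, not_le]
    intro _
    by_contra hre
    push_neg at hre
    have h1 : (x - (-1)).re = x.re + 1 := by simp [Complex.sub_re]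
    have h2 : |(x - (-1)).re| ≤ ‖x - (-1)‖ := Complex.abs_re_le_norm _
    rw [h1] at h2
    have : x.re + 1 ≤ |x.re + 1| := le_abs_self _
    linarith
  have hm1 : (-1 : ℂ) ∈ Ω := by simp [hΩ]
  have hconstball : ∀ x ∈ Metric.ball (-1 : ℂ) 1, F x = F (-1) := by
    intro x hx
    apply Convex.is_const_of_fderivWithin_eq_zero (𝕜 := ℂ) (convex_ball _ _)
      (fun y hy => ((hF0 y (hballΩ hy)).differentiableAt).differentiableWithinAt) ?_ hx
      (Metric.mem_ball_self one_pos)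
    intro y hy
    rw [fderivWithin_of_isOpen Metric.isOpen_ball hy]
    have h := (hF0 y (hballΩ hy)).hasFDerivAt.fderiv
    rw [h]
    refine ContinuousLinearMap.ext fun v => ?_
    simp
  have hFdiff : DifferentiableOn ℂ F Ω := fun w hw =>
    ((hF0 w hw).differentiableAt).differentiableWithinAt
  have hFan : AnalyticOnNhd ℂ F Ω := hFdiff.analyticOnNhd isOpenO
  have hconst : EqOn F (fun _ => F (-1)) Ω := by
    apply hFan.eqOn_of_preconnected_of_eventuallyEq (analyticOnNhd_const) preO hm1
    filter_upwards [Metric.isOpen_ball.mem_nhds (Metric.mem_ball_self one_pos)] with x hx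
    exact hconstball x hx
  have hFm1 : F (-1) = -((Real.pi : ℂ) ^ 2 / 6) := by
    have h1 : ((-1 : ℂ))⁻¹ = -1 := by norm_num
    have h2 : (-(-1 : ℂ)) = 1 := by norm_num
    simp only [hF, h1, h2, Complex.log_one, Li2_neg_one Li2 hana hser]
    ring
  have hFz : F z = F (-1) := hconst (show z ∈ Ω from hz)
  rw [hFm1] at hFz
  simp only [hF] at hFz
  linear_combination hFz
end main


/-- for the dilogarithm Li₂ (characterized as the function analytic on
ℂ ∖ [1,∞) that agrees with Σ_{k≥1} z^k/k² on the unit disk) and every z ∉ [0,∞),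
Li₂(z) + Li₂(1/z) = −π²/6 − (1/2)·log²(−z). -/
theorem stmt14 (Li2 : ℂ → ℂ)
    (hana : DifferentiableOn ℂ Li2 {z : ℂ | ¬(z.im = 0 ∧ 1 ≤ z.re)})
    (hser : ∀ z : ℂ, ‖z‖ < 1 → Li2 z = ∑' k : ℕ, z ^ (k + 1) / ((k : ℂ) + 1) ^ 2)
    (z : ℂ) (hz : ¬(z.im = 0 ∧ 0 ≤ z.re)) :
    Li2 z + Li2 z⁻¹ = -((Real.pi : ℂ) ^ 2 / 6) - (1 / 2) * Complex.log (-z) ^ 2 :=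
  stmt14' Li2 hana hser z hz
end
end

section
/- Let d ≥ 2 be an integer. For every complex z with 0 < |z| < 1, the series p(z) = Σ_{k=1}^∞ z^k/(k(k+d−1)) converges and equals (1/(d−1))·(z^{1−d} − 1)·log(1−z) + (1/(d−1))·Σ_{k=1}^{d−1} z^{k−d+1}/k, where log is the principal branch. -/
noncomputable section

/-- for d ≥ 2 and 0 < |z| < 1, the series p(z) = Σ_{k=1}^∞ z^k/(k(k+d−1))
converges and equals (1/(d−1))·(z^{1−d} − 1)·log(1−z) + (1/(d−1))·Σ_{k=1}^{d−1} z^{k−d+1}/k.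
(The series is written with summation index shifted by one: term m corresponds to k = m+1.) -/
theorem stmt16 (d : ℕ) (hd : 2 ≤ d) (z : ℂ) (hz0 : z ≠ 0) (hz1 : ‖z‖ < 1) :
    Summable (fun m : ℕ => z ^ (m + 1) / (((m : ℂ) + 1) * ((m : ℂ) + d))) ∧
    ∑' m : ℕ, z ^ (m + 1) / (((m : ℂ) + 1) * ((m : ℂ) + d)) =
      (1 / ((d : ℂ) - 1)) * (z ^ (1 - (d : ℤ)) - 1) * Complex.log (1 - z) +
        (1 / ((d : ℂ) - 1)) * ∑ k ∈ Finset.Icc 1 (d - 1), z ^ ((k : ℤ) - (d : ℤ) + 1) / (k : ℂ) := by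
  have hd1 : ((d : ℂ) - 1) ≠ 0 := sub_ne_zero.mpr (by exact_mod_cast (by omega : d ≠ 1))
  have h1 : HasSum (fun n : ℕ => z ^ n / n) (-Complex.log (1 - z)) :=
    Complex.hasSum_taylorSeries_neg_log hz1
  -- shifted by 1
  have hF : HasSum (fun m : ℕ => z ^ (m + 1) / ((m : ℂ) + 1)) (-Complex.log (1 - z)) := by
    have := (hasSum_nat_add_iff' (f := fun n : ℕ => z ^ n / n) 1).mpr h1
    simpa using this
  -- shifted by d
  have hG0 : HasSum (fun m : ℕ => z ^ (m + d) / ((m : ℂ) + d))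
      (-Complex.log (1 - z) - ∑ i ∈ Finset.range d, z ^ i / i) := by
    have := (hasSum_nat_add_iff' (f := fun n : ℕ => z ^ n / n) d).mpr h1
    convert this using 2 with m
    · rfl
    push_cast
    ring
  have hG : HasSum (fun m : ℕ => z ^ (1 - (d : ℤ)) * (z ^ (m + d) / ((m : ℂ) + d)))
      (z ^ (1 - (d : ℤ)) * (-Complex.log (1 - z) - ∑ i ∈ Finset.range d, z ^ i / i)) :=
    hG0.mul_left _
  have key : HasSum (fun m : ℕ => z ^ (m + 1) / (((m : ℂ) + 1) * ((m : ℂ) + d)))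
      ((1 / ((d : ℂ) - 1)) * ((-Complex.log (1 - z)) -
        z ^ (1 - (d : ℤ)) * (-Complex.log (1 - z) - ∑ i ∈ Finset.range d, z ^ i / i))) := by
    have := (hF.sub hG).mul_left (1 / ((d : ℂ) - 1))
    convert this using 2 with m
    · rfl
    have hm1 : ((m : ℂ) + 1) ≠ 0 := Nat.cast_add_one_ne_zero m
    have hmd : ((m : ℂ) + d) ≠ 0 := by
      have : (((m + d : ℕ)) : ℂ) ≠ 0 := Nat.cast_ne_zero.mpr (by omega)
      push_cast at this; exact this
    have hz : z ^ (1 - (d : ℤ)) * z ^ (m + d) = z ^ (m + 1) := by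
      rw [← zpow_natCast z (m + d), ← zpow_natCast z (m + 1), ← zpow_add₀ hz0]
      congr 1
      push_cast
      ring
    field_simp
    linear_combination ((m : ℂ) + 1) * hz
  refine ⟨key.summable, ?_⟩
  rw [key.tsum_eq]
  have hsum : ∑ i ∈ Finset.range d, z ^ i / (i : ℂ) =
      z ^ ((d : ℤ) - 1) * ∑ k ∈ Finset.Icc 1 (d - 1), z ^ ((k : ℤ) - (d : ℤ) + 1) / (k : ℂ) := by
    have hIcc : Finset.Icc 1 (d - 1) = Finset.Ico 1 d := by
      rw [← Finset.Ico_add_one_right_eq_Icc]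
      congr 1
      omega
    rw [hIcc, Finset.range_eq_Ico, Finset.sum_eq_sum_Ico_succ_bot (by omega : 0 < d)]
    simp only [Nat.cast_zero, pow_zero, div_zero, zero_add, Finset.mul_sum]
    refine Finset.sum_congr rfl fun k hk => ?_
    rw [← mul_div_assoc]
    congr 1
    rw [← zpow_natCast z k, ← zpow_add₀ hz0]
    congr 1
    ring
  rw [hsum]
  have hzz : z ^ (1 - (d : ℤ)) * z ^ ((d : ℤ) - 1) = 1 := by
    rw [← zpow_add₀ hz0]; norm_num
  linear_combination (1 / ((d : ℂ) - 1)) *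
    (∑ k ∈ Finset.Icc 1 (d - 1), z ^ ((k : ℤ) - (d : ℤ) + 1) / (k : ℂ)) * hzz
end
end

section
/- Let d ≥ 2 be an integer. For every complex z with |z| < 1, the series q(z) = Σ_{k=d}^∞ z^k/(k(k+1−d)) converges and equals (1/(d−1))·(1 − z^{d−1})·log(1−z) + (1/(d−1))·Σ_{k=1}^{d−1} z^k/k, where log is the principal branch. (The term k = d−1 is excluded from the series since the summation starts at k = d, so no denominator vanishes.) -/
noncomputable section

/-- for d ≥ 2 and |z| < 1, the series q(z) = Σ_{k=d}^∞ z^k/(k(k+1−d))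
converges and equals (1/(d−1))·(1 − z^{d−1})·log(1−z) + (1/(d−1))·Σ_{k=1}^{d−1} z^k/k.
(The series is written with summation index shifted: term m corresponds to k = m+d.) -/
theorem stmt17 (d : ℕ) (hd : 2 ≤ d) (z : ℂ) (hz : ‖z‖ < 1) :
    Summable (fun m : ℕ => z ^ (m + d) / (((m : ℂ) + d) * ((m : ℂ) + 1))) ∧
    ∑' m : ℕ, z ^ (m + d) / (((m : ℂ) + d) * ((m : ℂ) + 1)) =
      (1 / ((d : ℂ) - 1)) * (1 - z ^ (d - 1)) * Complex.log (1 - z) +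
        (1 / ((d : ℂ) - 1)) * ∑ k ∈ Finset.Icc 1 (d - 1), z ^ k / (k : ℂ) := by
  set L : ℂ := -Complex.log (1 - z) with hL
  have hbase : HasSum (fun n : ℕ => z ^ n / n) L := Complex.hasSum_taylorSeries_neg_log hz
  -- shifted by d : Σ_m z^(m+d)/(m+d) = L - Σ_{k<d} z^k/k
  have hB : HasSum (fun m : ℕ => z ^ (m + d) / ((m : ℂ) + d))
      (L - ∑ k ∈ Finset.range d, z ^ k / (k : ℂ)) := by
    have := (hasSum_nat_add_iff' (f := fun n : ℕ => z ^ n / n) d).mpr hbase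
    convert this using 2 with m
    · rfl
    push_cast
    ring_nf
  -- shifted by 1 and multiplied by z^(d-1) : Σ_m z^(m+d)/(m+1) = z^(d-1) * L
  have hA : HasSum (fun m : ℕ => z ^ (m + d) / ((m : ℂ) + 1)) (z ^ (d - 1) * L) := by
    have h1 : HasSum (fun m : ℕ => z ^ (m + 1) / ((m : ℂ) + 1)) L := by
      have := (hasSum_nat_add_iff' (f := fun n : ℕ => z ^ n / n) 1).mpr hbase
      simp only [Finset.range_one, Finset.sum_singleton] at this
      convert this using 2 with m
      · rfl
      · push_cast; ring_nf
      · simp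
    have := h1.mul_left (z ^ (d - 1))
    convert this using 2 with m
    · rfl
    rw [mul_div_assoc', ← pow_add]
    congr 2
    omega
  have hd1 : ((d : ℂ) - 1) ≠ 0 := by
    have : (1 : ℂ) ≠ (d : ℂ) := by
      intro h
      have : ((1 : ℕ) : ℂ) = (d : ℂ) := by simpa using h
      exact absurd (Nat.cast_injective this) (by omega)
    exact sub_ne_zero.mpr (Ne.symm this)
  have key : HasSum (fun m : ℕ => z ^ (m + d) / (((m : ℂ) + d) * ((m : ℂ) + 1)))
      ((1 / ((d : ℂ) - 1)) * (z ^ (d - 1) * L - (L - ∑ k ∈ Finset.range d, z ^ k / (k : ℂ)))) := by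
    have := ((hA.sub hB).mul_left (1 / ((d : ℂ) - 1)))
    convert this using 2 with m
    · rfl
    have hm1 : ((m : ℂ) + 1) ≠ 0 := by
      have : ((m + 1 : ℕ) : ℂ) ≠ 0 := Nat.cast_ne_zero.mpr (by omega)
      push_cast at this; exact this
    have hmd : ((m : ℂ) + d) ≠ 0 := by
      have : ((m + d : ℕ) : ℂ) ≠ 0 := Nat.cast_ne_zero.mpr (by omega)
      push_cast at this; exact this
    field_simp
    ring
  refine ⟨key.summable, ?_⟩
  rw [key.tsum_eq]
  have hsum : ∑ k ∈ Finset.range d, z ^ k / (k : ℂ) = ∑ k ∈ Finset.Icc 1 (d - 1), z ^ k / (k : ℂ) := by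
    rw [Finset.range_eq_Ico, Finset.sum_eq_sum_Ico_succ_bot (by omega : 0 < d)]
    have : Finset.Icc 1 (d - 1) = Finset.Ico 1 d := by
      rw [← Finset.Ico_add_one_right_eq_Icc]
      congr 1
      omega
    rw [this]
    simp
  rw [hsum, hL]
  ring
end
end
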